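/- arXiv:1805.02042 — 7 statements merged into one kernel-verified Lean document; each statement's English description precedes it below -/
import Mathlib

section
/- Let H=(V,E,w) be a directed hypergraph with vertex weights ω, and let Ĥ=(V̂,Ê) be its transformation to a directed normal graph: V̂ := V ∪ {vₑᵗ, vₑʰ : e ∈ E} where each new vertex has weight 0 and old vertices keep their weights; Ê := {(vₑᵗ, vₑʰ) : e ∈ E} ∪ {(u, vₑᵗ) : e ∈ E, u ∈ Tₑ} ∪ {(vₑʰ, v) : e ∈ E, v ∈ Hₑ}, where edge (vₑᵗ, vₑʰ) has weight wₑ and all other edges have weight 𝔐 := n·Σ_{e∈E} wₑ. For S ⊆ V define Ŝ := S ∪ {vₑᵗ : S ∩ Tₑ ≠ ∅} ∪ {vₑʰ : Hₑ ⊆ S}. Then for every S ⊆ V: ω(S) = ω(Ŝ) and w(∂⁺(S)) = w(∂̂⁺(Ŝ)), where ∂̂⁺ denotes the out-going cut in Ĥ. -/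
open Finset

/-- Edge-weight function of the directed normal graph `Ĥ` obtained from a directed
hypergraph: vertices are `V ⊕ E × Bool` where `Sum.inr (e, false)` is the tail-vertex
`vₑᵗ` and `Sum.inr (e, true)` is the head-vertex `vₑʰ` of edge `e`.  The edge
`(vₑᵗ, vₑʰ)` has weight `w e`; edges `(u, vₑᵗ)` for `u ∈ Tₑ` and `(vₑʰ, u)` for
`u ∈ Hₑ` have the large weight `M`; all other (non-)edges have weight `0`. -/
def hatw {V E : Type*} [DecidableEq V] [DecidableEq E]
    (Tl Hd : E → Finset V) (w : E → ℝ) (M : ℝ) :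
    V ⊕ E × Bool → V ⊕ E × Bool → ℝ
  | Sum.inr (e, false), Sum.inr (e', true) => if e = e' then w e else 0
  | Sum.inl u, Sum.inr (e, false) => if u ∈ Tl e then M else 0
  | Sum.inr (e, true), Sum.inl u => if u ∈ Hd e then M else 0
  | _, _ => 0

/-- The transformed subset `Ŝ = S ∪ {vₑᵗ : S ∩ Tₑ ≠ ∅} ∪ {vₑʰ : Hₑ ⊆ S}`. -/
def hatS {V E : Type*} [Fintype E] [DecidableEq V] [DecidableEq E]
    (Tl Hd : E → Finset V) (S : Finset V) : Finset (V ⊕ E × Bool) :=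
  S.image Sum.inl ∪
    (Finset.univ.filter (fun e => (Tl e ∩ S).Nonempty)).image (fun e => Sum.inr (e, false)) ∪
    (Finset.univ.filter (fun e => Hd e ⊆ S)).image (fun e => Sum.inr (e, true))

/-
The weight identity holds because `Ŝ` adds only weight-zero vertices to `S`. For the cut,
`Ŝ` is closed along every edge of weight `M`: an edge `(u, vₑᵗ)` with `u ∈ S` has
`vₑᵗ ∈ Ŝ`, and an edge `(vₑʰ, u)` with `vₑʰ ∈ Ŝ` has `u ∈ Hₑ ⊆ S`. So only the edges
`(vₑᵗ, vₑʰ)` leave `Ŝ`, and such an edge leaves `Ŝ` exactly when `Tₑ` meets `S` and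
`Hₑ ⊄ S`, i.e. when `e ∈ ∂⁺(S)`.
-/

section HatS

variable {V E : Type*} [Fintype E] [DecidableEq V] [DecidableEq E]
  (Tl Hd : E → Finset V) (S : Finset V)

@[simp]
lemma inl_mem_hatS {u : V} : Sum.inl u ∈ hatS Tl Hd S ↔ u ∈ S := by
  simp [hatS]

@[simp]
lemma inr_false_mem_hatS {e : E} :
    Sum.inr (e, false) ∈ hatS Tl Hd S ↔ (Tl e ∩ S).Nonempty := by
  simp [hatS]

@[simp]
lemma inr_true_mem_hatS {e : E} : Sum.inr (e, true) ∈ hatS Tl Hd S ↔ Hd e ⊆ S := by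
  simp [hatS]

lemma toLeft_hatS : (hatS Tl Hd S).toLeft = S := by
  ext u
  simp

lemma sum_hatS_elim_zero (ω : V → ℝ) :
    ∑ x ∈ hatS Tl Hd S, Sum.elim ω (fun _ => (0 : ℝ)) x = ∑ u ∈ S, ω u := by
  rw [sum_sum_eq_sum_toLeft_add_sum_toRight, toLeft_hatS]
  simp

variable (w : E → ℝ) (M : ℝ)

lemma hatw_eq_zero_of_mem_hatS_of_notMem {x y : V ⊕ E × Bool}
    (hx : x ∈ hatS Tl Hd S) (hy : y ∉ hatS Tl Hd S)
    (hxy : ∀ e, (x, y) ≠ (Sum.inr (e, false), Sum.inr (e, true))) :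
    hatw Tl Hd w M x y = 0 := by
  match x, y with
  | Sum.inr (e, false), Sum.inr (e', true) =>
    have hne : e ≠ e' := by rintro rfl; exact hxy e rfl
    simp [hatw, hne]
  | Sum.inl u, Sum.inr (e, false) =>
    have hTl : u ∉ Tl e := fun hu =>
      hy ((inr_false_mem_hatS Tl Hd S).2 ⟨u, mem_inter.2 ⟨hu, (inl_mem_hatS Tl Hd S).1 hx⟩⟩)
    simp [hatw, hTl]
  | Sum.inr (e, true), Sum.inl u =>
    have hHd : u ∉ Hd e := fun hu =>
      hy ((inl_mem_hatS Tl Hd S).2 ((inr_true_mem_hatS Tl Hd S).1 hx hu))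
    simp [hatw, hHd]
  | Sum.inl _, Sum.inl _ | Sum.inl _, Sum.inr (_, true) | Sum.inr (_, false), Sum.inl _
  | Sum.inr (_, _), Sum.inr (_, false) | Sum.inr (_, true), Sum.inr (_, true) =>
    simp [hatw]

variable [Fintype V]

lemma sum_hatw_hatS_compl :
    ∑ x ∈ hatS Tl Hd S, ∑ y ∈ (hatS Tl Hd S)ᶜ, hatw Tl Hd w M x y =
      ∑ e ∈ univ.filter (fun e => (Tl e ∩ S).Nonempty ∧ ¬ Hd e ⊆ S), w e := by
  set F := univ.filter (fun e => (Tl e ∩ S).Nonempty ∧ ¬ Hd e ⊆ S)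
  let arc : E → (V ⊕ E × Bool) × (V ⊕ E × Bool) := fun e => (Sum.inr (e, false), Sum.inr (e, true))
  have harc : Function.Injective arc := fun e e' h => by simpa [arc] using congrArg Prod.fst h
  have hsub : F.image arc ⊆ hatS Tl Hd S ×ˢ (hatS Tl Hd S)ᶜ := by
    intro p hp
    obtain ⟨e, he, rfl⟩ := mem_image.1 hp
    simpa [F, arc] using he
  rw [← sum_product' (f := hatw Tl Hd w M), ← sum_subset hsub, sum_image harc.injOn]
  · simp [arc, hatw]
  · rintro ⟨x, y⟩ hp hnot
    obtain ⟨hx, hy⟩ := mem_product.1 hp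
    refine hatw_eq_zero_of_mem_hatS_of_notMem Tl Hd S w M hx (mem_compl.1 hy) ?_
    rintro e he
    refine hnot (mem_image.2 ⟨e, ?_, he.symm⟩)
    simp only [Prod.mk.injEq] at he
    obtain ⟨rfl, rfl⟩ := he
    simpa [F] using And.intro hx (mem_compl.1 hy)

end HatS

theorem reduction_to_normal_graph_forward_general
    {V E : Type*} [Fintype V] [Fintype E] [DecidableEq V] [DecidableEq E]
    (Tl Hd : E → Finset V)
    (w : E → ℝ)
    (ω : V → ℝ)
    (M : ℝ)
    (S : Finset V) :
    (∑ u ∈ S, ω u) = (∑ x ∈ hatS Tl Hd S, Sum.elim ω (fun _ => (0 : ℝ)) x) ∧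
    (∑ e ∈ univ.filter (fun e => (Tl e ∩ S).Nonempty ∧ (Hd e \ S).Nonempty), w e)
      = ∑ x ∈ hatS Tl Hd S, ∑ y ∈ (hatS Tl Hd S)ᶜ, hatw Tl Hd w M x y := by
  refine ⟨(sum_hatS_elim_zero Tl Hd S ω).symm, ?_⟩
  simp only [sdiff_nonempty]
  exact (sum_hatw_hatS_compl Tl Hd S w M).symm

/-- Reduction to directed normal graphs, first part of Fact 1.1:
for every `S ⊆ V`, the transformed subset `Ŝ` has the same weight, and the weight of the
out-going cut of `S` in the hypergraph `H` equals that of `Ŝ` in the normal graph `Ĥ`. -/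
theorem reduction_to_normal_graph_forward
    {V E : Type*} [Fintype V] [Fintype E] [DecidableEq V] [DecidableEq E]
    (Tl Hd : E → Finset V) (hTl : ∀ e, (Tl e).Nonempty) (hHd : ∀ e, (Hd e).Nonempty)
    (w : E → ℝ) (hw : ∀ e, 0 ≤ w e)
    (ω : V → ℝ) (hω : ∀ u, 0 ≤ ω u)
    (M : ℝ) (hM : M = (Fintype.card V : ℝ) * ∑ e, w e)
    (S : Finset V) :
    (∑ u ∈ S, ω u) = (∑ x ∈ hatS Tl Hd S, Sum.elim ω (fun _ => (0 : ℝ)) x) ∧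
    (∑ e ∈ univ.filter (fun e => (Tl e ∩ S).Nonempty ∧ (Hd e \ S).Nonempty), w e)
      = ∑ x ∈ hatS Tl Hd S, ∑ y ∈ (hatS Tl Hd S)ᶜ, hatw Tl Hd w M x y :=
  reduction_to_normal_graph_forward_general Tl Hd w ω M S
end

section
/- Let H=(V,E,w) be a directed hypergraph with vertex weights ω : V → ℝ>0, let ∅ ≠ S ⊊ V with 0 ∈ S, and let v_0 be a vector in a real inner product space with ‖v_0‖² = 1/(4·ω(S)·ω(V∖S)). Define v_i := v_0 for i ∈ S and v_i := −v_0 for i ∈ V∖S. Then: (a) Σ_{{i,j}∈(V choose 2)} ω_i ω_j ‖v_i − v_j‖² = 1; and (b) setting d_e := max{0, max_{(i,j)∈Tₑ×Hₑ} d(i,j)} for each e ∈ E, where d(i,j) := ‖v_i − v_j‖² − ‖v_i − v_0‖² + ‖v_j − v_0‖², one has (1/2)·Σ_{e∈E} w_e·d_e = θ(S) := w(∂⁺(S))/(ω(S)·ω(V∖S)). Hence the SDP is a relaxation of the directed sparsest cut problem with product demands. -/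
/-!
The cut solution is `v i = σ i • v₀` with `σ = ±1` according to the side of the cut, so
`‖v i - v j‖² = (σ i - σ j)² ‖v₀‖²`. Summing, `∑∑ ω i ω j (σ i - σ j)² = 2((∑ ω)² - (∑ ω σ)²)`
`= 8 ω(S) ω(V∖S)`, which the normalisation `4 ‖v₀‖² ω(S) ω(V∖S) = 1` turns into (a). Since
`v z = v₀`, the quantity `d i j` is `8 ‖v₀‖²` when `i ∈ S`, `j ∉ S`, and `0` otherwise, so the
`max` over `Tₑ × Hₑ` is `8 ‖v₀‖²` exactly for the edges of `∂⁺(S)`, which gives (b).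
-/

open Finset

theorem Finset.sum_sum_mul_mul_sub_sq {ι R : Type*} [CommRing R] (s : Finset ι) (ω x : ι → R) :
    ∑ i ∈ s, ∑ j ∈ s, ω i * ω j * (x i - x j) ^ 2 =
      2 * ((∑ i ∈ s, ω i) * ∑ i ∈ s, ω i * x i ^ 2 - (∑ i ∈ s, ω i * x i) ^ 2) := by
  have h : ∀ i j, ω i * ω j * (x i - x j) ^ 2 =
      ω j * (ω i * x i ^ 2) + ω i * (ω j * x j ^ 2) - 2 * ((ω i * x i) * (ω j * x j)) :=
    fun i j => by ring
  simp_rw [h, sum_sub_distrib, sum_add_distrib, ← mul_sum, ← sum_mul, ← mul_sum]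
  ring

theorem Finset.sup'_ite_eq_ite_exists {ι α : Type*} [SemilatticeSup α] {s : Finset ι}
    (hs : s.Nonempty) (p : ι → Prop) [DecidablePred p] {a b : α} (hba : b ≤ a) :
    s.sup' hs (fun x => if p x then a else b) = if ∃ x ∈ s, p x then a else b := by
  split_ifs with h
  · obtain ⟨x, hx, hpx⟩ := h
    refine le_antisymm (sup'_le _ _ fun y _ => ?_) (le_sup'_of_le _ hx (by simp [hpx]))
    split_ifs <;> simp [hba]
  · push Not at h
    rw [sup'_congr hs rfl fun x hx => if_neg (h x hx), sup'_const]

section CutSign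

variable {V : Type*} [DecidableEq V] (S : Finset V)

def cutSign (i : V) : ℝ := if i ∈ S then 1 else -1

theorem cutSign_sq (i : V) : cutSign S i ^ 2 = 1 := by
  unfold cutSign; split_ifs <;> norm_num

theorem cutSign_smul {F : Type*} [AddCommGroup F] [Module ℝ F] (v₀ : F) (i : V) :
    cutSign S i • v₀ = if i ∈ S then v₀ else -v₀ := by
  unfold cutSign; split_ifs <;> simp

theorem cutSign_sub_sq_sub_add (i j z : V) (hz : z ∈ S) :
    (cutSign S i - cutSign S j) ^ 2 - (cutSign S i - cutSign S z) ^ 2 +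
        (cutSign S j - cutSign S z) ^ 2 = if i ∈ S ∧ j ∉ S then 8 else 0 := by
  unfold cutSign; by_cases hi : i ∈ S <;> by_cases hj : j ∈ S <;> norm_num [hi, hj, hz]

variable [Fintype V]

theorem sum_mul_cutSign (ω : V → ℝ) :
    ∑ i, ω i * cutSign S i = ∑ i ∈ S, ω i - ∑ i ∈ Sᶜ, ω i := by
  rw [← sum_add_sum_compl S, sub_eq_add_neg, ← sum_neg_distrib]
  congr 1 <;> refine sum_congr rfl fun i hi => ?_
  · simp [cutSign, hi]
  · simp [cutSign, mem_compl.1 hi]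

theorem sum_sum_mul_mul_cutSign_sub_sq (ω : V → ℝ) :
    ∑ i, ∑ j, ω i * ω j * (cutSign S i - cutSign S j) ^ 2 =
      8 * (∑ i ∈ S, ω i) * ∑ i ∈ Sᶜ, ω i := by
  rw [sum_sum_mul_mul_sub_sq, sum_mul_cutSign]
  simp only [cutSign_sq, mul_one, ← sum_add_sum_compl S ω]
  ring

end CutSign

theorem exists_mem_product_mem_and_not_mem_iff {V : Type*} [DecidableEq V] (T H S : Finset V) :
    (∃ ij ∈ T ×ˢ H, ij.1 ∈ S ∧ ij.2 ∉ S) ↔ (T ∩ S).Nonempty ∧ (H \ S).Nonempty := by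
  simp only [Prod.exists, mem_product, Finset.Nonempty, mem_inter, mem_sdiff]
  constructor
  · rintro ⟨i, j, ⟨hiT, hjH⟩, hiS, hjS⟩
    exact ⟨⟨i, hiT, hiS⟩, ⟨j, hjH, hjS⟩⟩
  · rintro ⟨⟨i, hiT, hiS⟩, ⟨j, hjH, hjS⟩⟩
    exact ⟨i, j, ⟨hiT, hjH⟩, hiS, hjS⟩

theorem sdp_relaxation_of_directed_sparsest_cut_general
    {V E : Type*} [Fintype V] [Fintype E] [DecidableEq V]
    {F : Type*} [NormedAddCommGroup F] [InnerProductSpace ℝ F]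
    (Tl Hd : E → Finset V) (hTl : ∀ e, (Tl e).Nonempty) (hHd : ∀ e, (Hd e).Nonempty)
    (w : E → ℝ)
    (ω : V → ℝ) (hω : ∀ u, 0 < ω u)
    (S : Finset V) (hS : S.Nonempty) (hS' : S ≠ Finset.univ)
    (z : V) (hz : z ∈ S)
    (v₀ : F) (hv₀ : ‖v₀‖ ^ 2 = 1 / (4 * (∑ u ∈ S, ω u) * (∑ u ∈ Sᶜ, ω u)))
    (v : V → F) (hv : ∀ i, v i = if i ∈ S then v₀ else -v₀)
    (d : V → V → ℝ)
    (hd : ∀ i j, d i j = ‖v i - v j‖ ^ 2 - ‖v i - v z‖ ^ 2 + ‖v j - v z‖ ^ 2) :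
    (1 / 2) * (∑ i, ∑ j, ω i * ω j * ‖v i - v j‖ ^ 2) = 1 ∧
    (1 / 2) * (∑ e, w e *
        max 0 (((Tl e) ×ˢ (Hd e)).sup' ((hTl e).product (hHd e)) (fun ij => d ij.1 ij.2)))
      = (∑ e ∈ univ.filter (fun e => (Tl e ∩ S).Nonempty ∧ (Hd e \ S).Nonempty), w e) /
          ((∑ u ∈ S, ω u) * (∑ u ∈ Sᶜ, ω u)) := by
  have hSc : Sᶜ.Nonempty := nonempty_iff_ne_empty.2 (by rwa [Ne, compl_eq_empty_iff])
  have ha : ∑ u ∈ S, ω u ≠ 0 := (sum_pos (fun u _ => hω u) hS).ne'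
  have hb : ∑ u ∈ Sᶜ, ω u ≠ 0 := (sum_pos (fun u _ => hω u) hSc).ne'
  have hnormalize : 4 * ‖v₀‖ ^ 2 * ((∑ u ∈ S, ω u) * (∑ u ∈ Sᶜ, ω u)) = 1 := by
    rw [hv₀]; field_simp
  have hnorm : ∀ i j, ‖v i - v j‖ ^ 2 = (cutSign S i - cutSign S j) ^ 2 * ‖v₀‖ ^ 2 := by
    intro i j
    rw [hv, hv, ← cutSign_smul, ← cutSign_smul, ← sub_smul, norm_smul, mul_pow,
      Real.norm_eq_abs, sq_abs]
  have hd' : ∀ i j, d i j = if i ∈ S ∧ j ∉ S then 8 * ‖v₀‖ ^ 2 else 0 := by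
    intro i j
    rw [hd, hnorm, hnorm, hnorm, ← sub_mul, ← add_mul, cutSign_sub_sq_sub_add S i j z hz,
      ite_mul, zero_mul]
  refine ⟨?_, ?_⟩
  · simp_rw [hnorm, ← mul_assoc, ← sum_mul, sum_sum_mul_mul_cutSign_sub_sq]
    linear_combination hnormalize
  · have hc : (0 : ℝ) ≤ 8 * ‖v₀‖ ^ 2 := by positivity
    simp_rw [hd', sup'_ite_eq_ite_exists _ _ hc, exists_mem_product_mem_and_not_mem_iff,
      apply_ite (max (0 : ℝ)), max_self, max_eq_right hc, mul_ite, mul_zero, ← sum_filter,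
      ← sum_mul]
    rw [eq_div_iff (mul_ne_zero ha hb)]
    linear_combination
      (∑ e ∈ univ.filter (fun e => (Tl e ∩ S).Nonempty ∧ (Hd e \ S).Nonempty), w e) * hnormalize

/-- The SDP is a relaxation of directed sparsest cut with product demands:
the integral solution induced by a cut `S` (with `v_i = v₀` for `i ∈ S`, `v_i = −v₀`
otherwise, `‖v₀‖² = 1/(4 ω(S) ω(V∖S))`) satisfies the normalization constraint (a) and has
SDP objective value exactly the directed sparsity `θ(S)` (b). -/
theorem sdp_relaxation_of_directed_sparsest_cut
    {V E : Type*} [Fintype V] [Fintype E] [DecidableEq V]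
    {F : Type*} [NormedAddCommGroup F] [InnerProductSpace ℝ F]
    (Tl Hd : E → Finset V) (hTl : ∀ e, (Tl e).Nonempty) (hHd : ∀ e, (Hd e).Nonempty)
    (w : E → ℝ) (hw : ∀ e, 0 ≤ w e)
    (ω : V → ℝ) (hω : ∀ u, 0 < ω u)
    (S : Finset V) (hS : S.Nonempty) (hS' : S ≠ Finset.univ)
    (z : V) (hz : z ∈ S)
    (v₀ : F) (hv₀ : ‖v₀‖ ^ 2 = 1 / (4 * (∑ u ∈ S, ω u) * (∑ u ∈ Sᶜ, ω u)))
    (v : V → F) (hv : ∀ i, v i = if i ∈ S then v₀ else -v₀)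
    (d : V → V → ℝ)
    (hd : ∀ i j, d i j = ‖v i - v j‖ ^ 2 - ‖v i - v z‖ ^ 2 + ‖v j - v z‖ ^ 2) :
    (1 / 2) * (∑ i, ∑ j, ω i * ω j * ‖v i - v j‖ ^ 2) = 1 ∧
    (1 / 2) * (∑ e, w e *
        max 0 (((Tl e) ×ˢ (Hd e)).sup' ((hTl e).product (hHd e)) (fun ij => d ij.1 ij.2)))
      = (∑ e ∈ univ.filter (fun e => (Tl e ∩ S).Nonempty ∧ (Hd e \ S).Nonempty), w e) /
          ((∑ u ∈ S, ω u) * (∑ u ∈ Sᶜ, ω u)) :=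
  sdp_relaxation_of_directed_sparsest_cut_general Tl Hd hTl hHd w ω hω S hS hS' z hz v₀ hv₀ v hv d
    hd
end

section
/- Let u_1, …, u_n and δ_0, δ_1, …, δ_n be real numbers such that Σ_{i=1}^n u_i = 0, Σ_{i=1}^n u_i² = 1, Σ_{i=1}^n δ_i = 1, and δ_i ≥ δ_0 > 0 for all i. Then δ_0 ≤ Σ_{i=1}^n δ_i u_i² − (Σ_{i=1}^n δ_i u_i)² ≤ max_i δ_i. -/
open Finset

/-- Bounding the variance: if `Σ uᵢ = 0`, `Σ uᵢ² = 1`, `Σ δᵢ = 1`, and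
`δᵢ ≥ δ₀ > 0` for all `i`, then `δ₀ ≤ Σ δᵢ uᵢ² − (Σ δᵢ uᵢ)² ≤ maxᵢ δᵢ`. -/
theorem variance_bound
    (n : ℕ) (hn : 0 < n) (u δ : Fin n → ℝ) (δ₀ : ℝ)
    (hu0 : ∑ i, u i = 0) (hu1 : ∑ i, (u i) ^ 2 = 1)
    (hδ1 : ∑ i, δ i = 1) (hδ0 : 0 < δ₀) (hδ : ∀ i, δ₀ ≤ δ i) :
    δ₀ ≤ (∑ i, δ i * (u i) ^ 2) - (∑ i, δ i * u i) ^ 2 ∧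
    (∑ i, δ i * (u i) ^ 2) - (∑ i, δ i * u i) ^ 2
      ≤ Finset.univ.sup' (⟨⟨0, hn⟩, Finset.mem_univ _⟩) δ := by
  set w : Fin n → ℝ := fun i => δ i - δ₀ with hw
  have hwnn : ∀ i, 0 ≤ w i := fun i => by simp [hw, hδ i]
  have hsumw : ∑ i, w i = 1 - n * δ₀ := by
    simp [hw, Finset.sum_sub_distrib, hδ1]
  have hsumw1 : ∑ i, w i ≤ 1 := by
    rw [hsumw]; nlinarith [hn.le, hδ0.le]
  have hm : ∑ i, δ i * u i = ∑ i, w i * u i := by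
    simp [hw, sub_mul, Finset.sum_sub_distrib, ← Finset.mul_sum, hu0]
  have hq : ∑ i, δ i * (u i) ^ 2 = δ₀ + ∑ i, w i * (u i) ^ 2 := by
    simp [hw, sub_mul, Finset.sum_sub_distrib, ← Finset.mul_sum, hu1]
  constructor
  · -- Cauchy-Schwarz: (Σ w u)² ≤ (Σ w)(Σ w u²)
    have key := Finset.sum_mul_sq_le_sq_mul_sq Finset.univ
      (fun i => Real.sqrt (w i)) (fun i => Real.sqrt (w i) * u i)
    have e1 : ∀ i, Real.sqrt (w i) * (Real.sqrt (w i) * u i) = w i * u i := fun i => by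
      rw [← mul_assoc, Real.mul_self_sqrt (hwnn i)]
    have e2 : ∀ i, (Real.sqrt (w i)) ^ 2 = w i := fun i => Real.sq_sqrt (hwnn i)
    have e3 : ∀ i, (Real.sqrt (w i) * u i) ^ 2 = w i * (u i) ^ 2 := fun i => by
      rw [mul_pow, e2]
    simp only [e1, e2, e3] at key
    have hwu2 : 0 ≤ ∑ i, w i * (u i) ^ 2 :=
      Finset.sum_nonneg fun i _ => mul_nonneg (hwnn i) (sq_nonneg _)
    have : (∑ i, w i * u i) ^ 2 ≤ ∑ i, w i * (u i) ^ 2 := by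
      calc (∑ i, w i * u i) ^ 2 ≤ (∑ i, w i) * ∑ i, w i * (u i) ^ 2 := key
        _ ≤ 1 * ∑ i, w i * (u i) ^ 2 := mul_le_mul_of_nonneg_right hsumw1 hwu2
        _ = _ := one_mul _
    rw [hq, hm]; linarith
  · have hM : ∀ i, δ i ≤ Finset.univ.sup' (⟨⟨0, hn⟩, Finset.mem_univ _⟩) δ :=
      fun i => Finset.le_sup' δ (Finset.mem_univ i)
    have : ∑ i, δ i * (u i) ^ 2 ≤
        ∑ i, (Finset.univ.sup' (⟨⟨0, hn⟩, Finset.mem_univ _⟩) δ) * (u i) ^ 2 :=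
      Finset.sum_le_sum fun i _ => mul_le_mul_of_nonneg_right (hM i) (sq_nonneg _)
    rw [← Finset.mul_sum, hu1, mul_one] at this
    nlinarith [sq_nonneg (∑ i, δ i * u i)]
end

section
/- Let V be a finite set of size n with κ-skewed vertex weights ω : V → {1, …, κ} and W := Σ_{i∈V} ω_i, and let K ∈ ℝ^{V×V} be the symmetric matrix whose quadratic form is uᵀKu = (1/2)·Σ_{i∈V} Σ_{j∈V} ω_i ω_j (u_i − u_j)². Then every unit vector u ∈ ℝ^V orthogonal to the all-ones vector 𝟙 satisfies W²/(κn) ≤ uᵀKu ≤ κW²/n; equivalently, all eigenvalues of K on eigenvectors orthogonal to 𝟙 lie in the range [W²/(κn), κW²/n]. -/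
open Finset Matrix

private lemma key_expand {V : Type*} [Fintype V] (a b u : V → ℝ) :
    ∑ i, ∑ j, a i * b j * (u i - u j) ^ 2
      = (∑ i, a i * u i ^ 2) * (∑ j, b j) + (∑ i, a i) * (∑ j, b j * u j ^ 2)
        - (∑ i, a i * u i) * (2 * ∑ j, b j * u j) := by
  have h1 : ∀ i, ∑ j, a i * b j * (u i - u j) ^ 2
      = (a i * u i ^ 2) * (∑ j, b j) + a i * (∑ j, b j * u j ^ 2)
        - (a i * u i) * (2 * ∑ j, b j * u j) := by
    intro i
    simp only [Finset.mul_sum]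
    rw [← Finset.sum_add_distrib, ← Finset.sum_sub_distrib]
    exact Finset.sum_congr rfl fun j _ => by ring
  simp_rw [h1]
  rw [Finset.sum_sub_distrib, Finset.sum_add_distrib, ← Finset.sum_mul, ← Finset.sum_mul,
    ← Finset.sum_mul]

/-- Non-zero eigenvalues of `K`: for the weighted complete-graph Laplacian
`K` with `κ`-skewed weights, every unit vector orthogonal to the all-ones vector has
Rayleigh quotient in `[W²/(κn), κW²/n]`; i.e. all eigenvalues of `K` on eigenvectors
orthogonal to `𝟙` lie in that range. -/
theorem laplacian_eigenvalue_range
    {V : Type*} [Fintype V] [DecidableEq V]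
    (n : ℕ) (hn : n = Fintype.card V) (hn0 : 0 < n)
    (κ : ℝ) (hκ : 1 ≤ κ) (ω : V → ℝ) (hω : ∀ i, 1 ≤ ω i ∧ ω i ≤ κ)
    (W : ℝ) (hW : W = ∑ i, ω i)
    (K : Matrix V V ℝ) (hKsymm : K.IsSymm)
    (hK : ∀ u : V → ℝ, u ⬝ᵥ (K *ᵥ u) = (1 / 2) * ∑ i, ∑ j, ω i * ω j * (u i - u j) ^ 2) :
    ∀ u : V → ℝ, (∑ i, u i = 0) → (∑ i, (u i) ^ 2 = 1) →
      W ^ 2 / (κ * n) ≤ u ⬝ᵥ (K *ᵥ u) ∧ u ⬝ᵥ (K *ᵥ u) ≤ κ * W ^ 2 / n := by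
  intro u hu1 hu2
  have hκ0 : (0:ℝ) < κ := lt_of_lt_of_le one_pos hκ
  have hn0' : (0:ℝ) < n := by exact_mod_cast hn0
  set S : ℝ := ∑ i, ω i * u i ^ 2 with hS
  set T : ℝ := ∑ i, ω i * u i with hT
  have hone : ∑ _j : V, (1:ℝ) = (n : ℝ) := by
    rw [Finset.sum_const, Finset.card_univ, ← hn]; simp
  have hWn : (n:ℝ) ≤ W := by
    rw [hW, ← hone]
    exact Finset.sum_le_sum fun i _ => (hω i).1
  have hWκn : W ≤ κ * n := by
    rw [hW]
    calc ∑ i, ω i ≤ ∑ _i : V, κ := Finset.sum_le_sum fun i _ => (hω i).2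
    _ = κ * n := by rw [Finset.sum_const, Finset.card_univ, ← hn]; ring
  have hW0 : (0:ℝ) < W := lt_of_lt_of_le hn0' hWn
  have hS1 : 1 ≤ S := by
    rw [← hu2]
    exact Finset.sum_le_sum fun i _ => by nlinarith [(hω i).1, sq_nonneg (u i)]
  have hSκ : S ≤ κ := by
    calc S ≤ ∑ i, κ * u i ^ 2 :=
          Finset.sum_le_sum fun i _ => by nlinarith [(hω i).2, sq_nonneg (u i)]
    _ = κ := by rw [← Finset.mul_sum, hu2, mul_one]
  -- main expansion
  have expand : ∑ i, ∑ j, ω i * ω j * (u i - u j) ^ 2 = 2 * (W * S - T ^ 2) := by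
    rw [key_expand ω ω u, ← hW, ← hS, ← hT]; ring
  -- lower-bound expansion
  have expand2 : ∑ i, ∑ j, (ω i + ω j - 1) * (u i - u j) ^ 2
      = 2 * ((n : ℝ) * S + W - n) := by
    have hsplit : ∑ i, ∑ j, (ω i + ω j - 1) * (u i - u j) ^ 2
        = (∑ i, ∑ j, ω i * (1:ℝ) * (u i - u j) ^ 2)
          + (∑ i, ∑ j, (1:ℝ) * ω j * (u i - u j) ^ 2)
          - ∑ i, ∑ j, (1:ℝ) * (1:ℝ) * (u i - u j) ^ 2 := by
      rw [← Finset.sum_add_distrib, ← Finset.sum_sub_distrib]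
      refine Finset.sum_congr rfl fun i _ => ?_
      rw [← Finset.sum_add_distrib, ← Finset.sum_sub_distrib]
      exact Finset.sum_congr rfl fun j _ => by ring
    rw [hsplit, key_expand ω (fun _ => 1) u, key_expand (fun _ => 1) ω u,
      key_expand (fun _ => 1) (fun _ => 1) u]
    simp only [one_mul]
    rw [← hW, ← hS, ← hT, hu1, hu2, hone]
    ring
  have hpt : ∑ i, ∑ j, (ω i + ω j - 1) * (u i - u j) ^ 2
      ≤ ∑ i, ∑ j, ω i * ω j * (u i - u j) ^ 2 := by
    refine Finset.sum_le_sum fun i _ => Finset.sum_le_sum fun j _ => ?_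
    nlinarith [mul_nonneg (mul_nonneg (sub_nonneg.2 (hω i).1) (sub_nonneg.2 (hω j).1)) (sq_nonneg (u i - u j))]
  have hQ : u ⬝ᵥ (K *ᵥ u) = W * S - T ^ 2 := by
    rw [hK u, expand]; ring
  constructor
  · -- lower bound
    rw [hQ]
    have h1 : (n : ℝ) * S + W - n ≤ W * S - T ^ 2 := by
      rw [expand2, expand] at hpt; linarith
    have h2 : W ≤ (n : ℝ) * S + W - n := by nlinarith
    have h3 : W ^ 2 / (κ * n) ≤ W := by
      rw [div_le_iff₀ (by positivity)]
      nlinarith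
    linarith
  · -- upper bound
    rw [hQ, le_div_iff₀ hn0']
    nlinarith [sq_nonneg T, mul_nonneg (mul_nonneg hW0.le hn0'.le) (sub_nonneg.2 hSκ),
      mul_nonneg (mul_nonneg hκ0.le hW0.le) (sub_nonneg.2 hWn)]
end

section
/- Let {v_i}_{i∈V} be vectors in a real inner product space, let ω : V → ℝ≥0 be weights with W := Σ_{i∈V} ω_i > 0, and suppose Σ_{{i,j}∈(V choose 2)} ω_i ω_j ‖v_i − v_j‖² = 1. Fix i_0 ∈ V and let L := B(i_0, 1/(√8·W)) = {j ∈ V : ‖v_{i_0} − v_j‖² ≤ 1/(8W²)}. Then Σ_{j∈V} ω_j · Δ(j, L) ≥ 1/(8W), where Δ(j, L) := min_{i∈L} ‖v_i − v_j‖². -/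
/-!
Let `c = v i₀` and `ρ = 1/(8W²)`, so that every point of `L` lies within squared distance `ρ`
of `c`. Passing through the point of `L` nearest to `vⱼ` gives `‖c - vⱼ‖² ≤ 2Δ(j, L) + 2ρ`, and
passing through `c` gives `‖vᵢ - vⱼ‖² ≤ 4Δ(i, L) + 4Δ(j, L) + 8ρ`. Summing against `ωᵢωⱼ`,
`2 ≤ 8W · Σⱼ ωⱼΔ(j, L) + 8ρW² = 8W · Σⱼ ωⱼΔ(j, L) + 1`.
-/

open Finset

theorem norm_sub_sq_le_two_mul_add {E : Type*} [SeminormedAddCommGroup E] (x y z : E) :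
    ‖x - y‖ ^ 2 ≤ 2 * ‖x - z‖ ^ 2 + 2 * ‖z - y‖ ^ 2 := by
  calc ‖x - y‖ ^ 2 ≤ (‖x - z‖ + ‖z - y‖) ^ 2 := by
        gcongr; exact norm_sub_le_norm_sub_add_norm_sub x z y
    _ ≤ 2 * ‖x - z‖ ^ 2 + 2 * ‖z - y‖ ^ 2 := by linarith [add_sq_le (a := ‖x - z‖) (b := ‖z - y‖)]

theorem sum_sum_mul_mul_add_add {ι : Type*} (s : Finset ι) (ω f : ι → ℝ) (c : ℝ) :
    ∑ i ∈ s, ∑ j ∈ s, ω i * ω j * (f i + f j + c)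
      = 2 * (∑ i ∈ s, ω i) * ∑ i ∈ s, ω i * f i + c * (∑ i ∈ s, ω i) ^ 2 := by
  have h (i j : ι) : ω i * ω j * (f i + f j + c)
      = ω i * f i * ω j + ω i * (ω j * f j) + c * (ω i * ω j) := by ring
  simp only [h, sum_add_distrib, ← mul_sum, ← sum_mul]
  ring

section NearestPoint

variable {ι E : Type*} [SeminormedAddCommGroup E] (v : ι → E) {L : Finset ι} (hL : L.Nonempty)
  {c : E} {ρ : ℝ}

theorem norm_sub_sq_le_two_mul_inf'_add (hρ : ∀ i ∈ L, ‖c - v i‖ ^ 2 ≤ ρ) (j : ι) :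
    ‖c - v j‖ ^ 2 ≤ 2 * L.inf' hL (fun i => ‖v i - v j‖ ^ 2) + 2 * ρ := by
  obtain ⟨a, haL, ha⟩ := L.exists_mem_eq_inf' hL (fun i => ‖v i - v j‖ ^ 2)
  rw [ha]
  linarith [norm_sub_sq_le_two_mul_add c (v j) (v a), hρ a haL]

theorem norm_sub_sq_le_four_mul_inf'_add (hρ : ∀ i ∈ L, ‖c - v i‖ ^ 2 ≤ ρ) (i j : ι) :
    ‖v i - v j‖ ^ 2 ≤ 4 * L.inf' hL (fun k => ‖v k - v i‖ ^ 2)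
      + 4 * L.inf' hL (fun k => ‖v k - v j‖ ^ 2) + 8 * ρ := by
  have hi := norm_sub_sq_le_two_mul_inf'_add v hL hρ i
  have hj := norm_sub_sq_le_two_mul_inf'_add v hL hρ j
  rw [norm_sub_rev] at hi
  linarith [norm_sub_sq_le_two_mul_add (v i) (v j) c]

theorem sum_sum_mul_mul_norm_sub_sq_le [Fintype ι] {ω : ι → ℝ} (hω : ∀ i, 0 ≤ ω i)
    (hρ : ∀ i ∈ L, ‖c - v i‖ ^ 2 ≤ ρ) :
    ∑ i, ∑ j, ω i * ω j * ‖v i - v j‖ ^ 2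
      ≤ 8 * (∑ i, ω i) * (∑ j, ω j * L.inf' hL (fun i => ‖v i - v j‖ ^ 2))
        + 8 * ρ * (∑ i, ω i) ^ 2 := by
  calc ∑ i, ∑ j, ω i * ω j * ‖v i - v j‖ ^ 2
      ≤ ∑ i, ∑ j, ω i * ω j * (4 * L.inf' hL (fun k => ‖v k - v i‖ ^ 2)
          + 4 * L.inf' hL (fun k => ‖v k - v j‖ ^ 2) + 8 * ρ) := by
        gcongr with i _ j _
        · exact mul_nonneg (hω i) (hω j)
        · exact norm_sub_sq_le_four_mul_inf'_add v hL hρ i j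
    _ = _ := by
        rw [sum_sum_mul_mul_add_add]
        simp only [mul_left_comm _ (4 : ℝ), ← mul_sum]
        ring

end NearestPoint

theorem mass_far_from_ball_general
    {V : Type*} [Fintype V]
    {F : Type*} [NormedAddCommGroup F]
    (v : V → F) (ω : V → ℝ) (hω : ∀ i, 0 ≤ ω i)
    (W : ℝ) (hW : W = ∑ i, ω i) (hWpos : 0 < W)
    (hsum : (1 / 2) * (∑ i, ∑ j, ω i * ω j * ‖v i - v j‖ ^ 2) = 1)
    (i₀ : V)
    (L : Finset V)
    (hL : L = Finset.univ.filter (fun j => ‖v i₀ - v j‖ ^ 2 ≤ 1 / (8 * W ^ 2)))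
    (hLne : L.Nonempty) :
    1 / (8 * W) ≤ ∑ j, ω j * (L.inf' hLne (fun i => ‖v i - v j‖ ^ 2)) := by
  have hρ : ∀ i ∈ L, ‖v i₀ - v i‖ ^ 2 ≤ 1 / (8 * W ^ 2) := by
    intro i hi
    rw [hL, mem_filter] at hi
    exact hi.2
  have hbound := sum_sum_mul_mul_norm_sub_sq_le v hLne hω hρ
  rw [← hW, show 8 * (1 / (8 * W ^ 2)) * W ^ 2 = 1 by field_simp] at hbound
  rw [div_le_iff₀ (by positivity)]
  linarith

/-- if `Σ_{{i,j}} ωᵢωⱼ‖vᵢ−vⱼ‖² = 1` and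
`L = B(i₀, 1/(√8 W)) = {j : ‖v_{i₀} − vⱼ‖² ≤ 1/(8W²)}`, then
`Σⱼ ωⱼ Δ(j, L) ≥ 1/(8W)` where `Δ(j, L) = min_{i∈L} ‖vᵢ − vⱼ‖²`. -/
theorem mass_far_from_ball
    {V : Type*} [Fintype V] [DecidableEq V]
    {F : Type*} [NormedAddCommGroup F] [InnerProductSpace ℝ F]
    (v : V → F) (ω : V → ℝ) (hω : ∀ i, 0 ≤ ω i)
    (W : ℝ) (hW : W = ∑ i, ω i) (hWpos : 0 < W)
    (hsum : (1 / 2) * (∑ i, ∑ j, ω i * ω j * ‖v i - v j‖ ^ 2) = 1)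
    (i₀ : V)
    (L : Finset V)
    (hL : L = Finset.univ.filter (fun j => ‖v i₀ - v j‖ ^ 2 ≤ 1 / (8 * W ^ 2)))
    (hLne : L.Nonempty) :
    1 / (8 * W) ≤ ∑ j, ω j * (L.inf' hLne (fun i => ‖v i - v j‖ ^ 2)) :=
  mass_far_from_ball_general v ω hω W hW hWpos hsum i₀ L hL hLne
end

section
/- Let {v_i}_{i∈V} be vectors in a real inner product space, let ω : V → ℝ≥0 be weights with W := Σ_{i∈V} ω_i > 0, and suppose Σ_{{i,j}∈(V choose 2)} ω_i ω_j ‖v_i − v_j‖² ≤ 1. Then there exists a vertex i_0 ∈ V such that ω(B(i_0, 3/W)) ≥ W/2, where B(i, r) := {j ∈ V : ‖v_i − v_j‖² ≤ r²} and ω(S) := Σ_{u∈S} ω_u. -/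
/-!
Averaging `∑ⱼ ωⱼ‖vᵢ − vⱼ‖²` over `i` with weights `ωᵢ` gives at most `2 / W`, so some vertex `i`
attains `∑ⱼ ωⱼ‖vᵢ − vⱼ‖² ≤ 2 / W`. By Markov's inequality the vertices outside `B(i, 3 / W)`
then carry weight at most `(2 / W) / (9 / W²) = 2W / 9 < W / 2`.
-/

open Finset

theorem Finset.exists_sum_mul_le_sum_mul {ι : Type*} (s : Finset ι) (w A : ι → ℝ)
    (hw : ∀ i ∈ s, 0 ≤ w i) (hs : 0 < ∑ i ∈ s, w i) :
    ∃ i ∈ s, (∑ j ∈ s, w j) * A i ≤ ∑ j ∈ s, w j * A j := by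
  obtain ⟨i, hi, hle⟩ := (concaveOn_id convex_univ).exists_le_of_centerMass hw hs
    (fun i _ => Set.mem_univ (A i))
  refine ⟨i, hi, ?_⟩
  rw [id, id, centerMass, smul_eq_mul, le_inv_mul_iff₀ hs] at hle
  simpa only [smul_eq_mul] using hle

theorem Finset.mul_sum_filter_lt_le_sum_mul {ι : Type*} (s : Finset ι) (w d : ι → ℝ)
    (hw : ∀ i ∈ s, 0 ≤ w i) (hd : ∀ i ∈ s, 0 ≤ d i) (t : ℝ) :
    t * ∑ i ∈ s with t < d i, w i ≤ ∑ i ∈ s, w i * d i := calc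
  t * ∑ i ∈ s with t < d i, w i = ∑ i ∈ s with t < d i, w i * t := by
    rw [mul_sum]; simp_rw [mul_comm]
  _ ≤ ∑ i ∈ s with t < d i, w i * d i :=
    sum_le_sum fun i hi => by
      rw [mem_filter] at hi; exact mul_le_mul_of_nonneg_left hi.2.le (hw i hi.1)
  _ ≤ ∑ i ∈ s, w i * d i :=
    sum_le_sum_of_subset_of_nonneg (filter_subset _ _) fun i hi _ =>
      mul_nonneg (hw i hi) (hd i hi)

theorem exists_heavy_ball_general
    {V : Type*} [Fintype V]
    {F : Type*} [NormedAddCommGroup F]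
    (v : V → F) (ω : V → ℝ) (hω : ∀ i, 0 ≤ ω i)
    (W : ℝ) (hW : W = ∑ i, ω i) (hWpos : 0 < W)
    (hsum : (1 / 2) * (∑ i, ∑ j, ω i * ω j * ‖v i - v j‖ ^ 2) ≤ 1) :
    ∃ i₀ : V, W / 2 ≤
      ∑ j ∈ Finset.univ.filter (fun j => ‖v i₀ - v j‖ ^ 2 ≤ (3 / W) ^ 2), ω j := by
  set d : V → V → ℝ := fun i j => ‖v i - v j‖ ^ 2
  obtain ⟨i, -, hmean⟩ := exists_sum_mul_le_sum_mul univ ω (fun i => ∑ j, ω j * d i j)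
    (fun i _ => hω i) (hW ▸ hWpos)
  refine ⟨i, ?_⟩
  have hWmean : W * ∑ j, ω j * d i j ≤ 2 := calc
    W * ∑ j, ω j * d i j ≤ ∑ i, ∑ j, ω i * ω j * d i j := by
      simpa only [← hW, mul_sum, mul_assoc] using hmean
    _ ≤ 2 := by linarith
  have hmarkov := mul_sum_filter_lt_le_sum_mul univ ω (d i) (fun j _ => hω j)
    (fun j _ => sq_nonneg _) ((3 / W) ^ 2)
  have hsplit := sum_filter_add_sum_filter_not univ (fun j => d i j ≤ (3 / W) ^ 2) ω
  simp only [not_le, ← hW] at hsplit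
  have hfar : 9 / W * ∑ j with (3 / W) ^ 2 < d i j, ω j ≤ 2 := calc
    9 / W * ∑ j with (3 / W) ^ 2 < d i j, ω j
        = W * ((3 / W) ^ 2 * ∑ j with (3 / W) ^ 2 < d i j, ω j) := by
      rw [← mul_assoc, show W * (3 / W) ^ 2 = 9 / W by field_simp; norm_num]
    _ ≤ 2 := (mul_le_mul_of_nonneg_left hmarkov hWpos.le).trans hWmean
  rw [div_mul_eq_mul_div, div_le_iff₀ hWpos] at hfar
  linarith

/-- if `Σ_{{i,j}} ωᵢωⱼ‖vᵢ−vⱼ‖² ≤ 1`, then some vertex `i₀` satisfies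
`ω(B(i₀, 3/W)) ≥ W/2` where `B(i, r) = {j : ‖vᵢ − vⱼ‖² ≤ r²}`. -/
theorem exists_heavy_ball
    {V : Type*} [Fintype V] [DecidableEq V]
    {F : Type*} [NormedAddCommGroup F] [InnerProductSpace ℝ F]
    (v : V → F) (ω : V → ℝ) (hω : ∀ i, 0 ≤ ω i)
    (W : ℝ) (hW : W = ∑ i, ω i) (hWpos : 0 < W)
    (hsum : (1 / 2) * (∑ i, ∑ j, ω i * ω j * ‖v i - v j‖ ^ 2) ≤ 1) :
    ∃ i₀ : V, W / 2 ≤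
      ∑ j ∈ Finset.univ.filter (fun j => ‖v i₀ - v j‖ ^ 2 ≤ (3 / W) ^ 2), ω j :=
  exists_heavy_ball_general v ω hω W hW hWpos hsum
end

section
/- Let {v_i}_{i∈V} be vectors in a real inner product space, let ω : V → ℝ≥0 be weights with W := Σ_{i∈V} ω_i > 0. Suppose that for every vertex i ∈ V, ω(B(i, 1/(√8·W))) < W/4, and let S ⊆ V be a subset with ω(S) ≥ W/2. Then Σ_{{i,j}∈(S choose 2)} ω_i ω_j ‖v_i − v_j‖² ≥ 1/128. -/
open Finset

/-- if every ball `B(i, 1/(√8 W)) = {j : ‖vᵢ − vⱼ‖² ≤ 1/(8W²)}` has weight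
less than `W/4`, then any subset `S` of weight at least `W/2` satisfies
`Σ_{{i,j}∈(S choose 2)} ωᵢωⱼ‖vᵢ−vⱼ‖² ≥ 1/128`. -/
theorem well_spread_lower_bound
    {V : Type*} [Fintype V] [DecidableEq V]
    {F : Type*} [NormedAddCommGroup F] [InnerProductSpace ℝ F]
    (v : V → F) (ω : V → ℝ) (hω : ∀ i, 0 ≤ ω i)
    (W : ℝ) (hW : W = ∑ i, ω i) (hWpos : 0 < W)
    (hball : ∀ i : V,
      ∑ j ∈ Finset.univ.filter (fun j => ‖v i - v j‖ ^ 2 ≤ 1 / (8 * W ^ 2)), ω j < W / 4)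
    (S : Finset V) (hS : W / 2 ≤ ∑ u ∈ S, ω u) :
    1 / 128 ≤ (1 / 2) * ∑ i ∈ S, ∑ j ∈ S, ω i * ω j * ‖v i - v j‖ ^ 2 := by
  have hinner : ∀ i ∈ S, 1 / (32 * W) ≤ ∑ j ∈ S, ω j * ‖v i - v j‖ ^ 2 := by
    intro i _
    set P : V → Prop := fun j => ‖v i - v j‖ ^ 2 ≤ 1 / (8 * W ^ 2) with hP
    have hnear : ∑ j ∈ S.filter P, ω j < W / 4 := by
      refine lt_of_le_of_lt ?_ (hball i)
      exact Finset.sum_le_sum_of_subset_of_nonneg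
        (Finset.filter_subset_filter _ (Finset.subset_univ S)) (fun j _ _ => hω j)
    have hsplit : ∑ j ∈ S.filter P, ω j + ∑ j ∈ S.filter (fun j => ¬ P j), ω j
        = ∑ j ∈ S, ω j := Finset.sum_filter_add_sum_filter_not S P ω
    have hfar : W / 4 ≤ ∑ j ∈ S.filter (fun j => ¬ P j), ω j := by linarith
    calc 1 / (32 * W) = (W / 4) * (1 / (8 * W ^ 2)) := by
            field_simp; ring
      _ ≤ (∑ j ∈ S.filter (fun j => ¬ P j), ω j) * (1 / (8 * W ^ 2)) := by
            apply mul_le_mul_of_nonneg_right hfar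
            positivity
      _ = ∑ j ∈ S.filter (fun j => ¬ P j), ω j * (1 / (8 * W ^ 2)) := by
            rw [Finset.sum_mul]
      _ ≤ ∑ j ∈ S.filter (fun j => ¬ P j), ω j * ‖v i - v j‖ ^ 2 := by
            refine Finset.sum_le_sum fun j hj => ?_
            have hj' := (Finset.mem_filter.mp hj).2
            exact mul_le_mul_of_nonneg_left (le_of_not_ge hj') (hω j)
      _ ≤ ∑ j ∈ S, ω j * ‖v i - v j‖ ^ 2 := by
            refine Finset.sum_le_sum_of_subset_of_nonneg (Finset.filter_subset _ _)
              fun j _ _ => mul_nonneg (hω j) (sq_nonneg _)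
  have hmain : 1 / 64 ≤ ∑ i ∈ S, ∑ j ∈ S, ω i * ω j * ‖v i - v j‖ ^ 2 := by
    have h1 : ∀ i ∈ S, ω i * (1 / (32 * W)) ≤ ∑ j ∈ S, ω i * ω j * ‖v i - v j‖ ^ 2 := by
      intro i hi
      have : ∑ j ∈ S, ω i * ω j * ‖v i - v j‖ ^ 2
          = ω i * ∑ j ∈ S, ω j * ‖v i - v j‖ ^ 2 := by
        rw [Finset.mul_sum]; congr 1; ext j; ring
      rw [this]
      exact mul_le_mul_of_nonneg_left (hinner i hi) (hω i)
    calc 1 / 64 = (W / 2) * (1 / (32 * W)) := by field_simp; ring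
      _ ≤ (∑ i ∈ S, ω i) * (1 / (32 * W)) := by
          apply mul_le_mul_of_nonneg_right hS; positivity
      _ = ∑ i ∈ S, ω i * (1 / (32 * W)) := by rw [Finset.sum_mul]
      _ ≤ _ := Finset.sum_le_sum h1
  linarith
end
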